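/- The quasi-distance function d_F : ℝ^k → [0, c_F] is Lipschitz continuous, satisfies d_F(u) = 0 if and only if u ∈ N^-, d_F(u) = c_F if and only if u ∈ N^+, and satisfies |∇d_F(u)| ≤ √(2F(u)) for a.e. u ∈ ℝ^k. -/

import Mathlib

open MeasureTheory

lemma aux_min_one {a b R : ℝ} : |min a R - min b R| ≤ |a - b| := by
  rcases abs_cases (a - b) with ⟨h1, h2⟩ | ⟨h1, h2⟩ <;> rw [abs_le] <;>
    simp only [min_def] <;> split_ifs <;> constructor <;> linarith

lemma aux_min_lip {R a b c d e : ℝ} (h1 : 2*R ≤ a + b) (h2 : 2*R ≤ c + d)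
    (hac : |a - c| ≤ e) (hbd : |b - d| ≤ e) :
    |(min a R - min b R) - (min c R - min d R)| ≤ e := by
  rw [abs_le] at hac hbd ⊢
  simp only [min_def]
  split_ifs <;> constructor <;> linarith

/-- Properties of the quasi-distance function `d_F : ℝ^k → [0, c_F]`:
Lipschitz continuity, `d_F(u) = 0 ↔ u ∈ N⁻`, `d_F(u) = c_F ↔ u ∈ N⁺`,
and the a.e. gradient bound `|∇d_F(u)| ≤ √(2F(u))`. -/
theorem quasi_distance_properties (k : ℕ)
    (Nplus Nminus : Set (EuclideanSpace ℝ (Fin k)))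
    (hNpc : IsCompact Nplus) (hNmc : IsCompact Nminus)
    (hNpconn : IsConnected Nplus) (hNmconn : IsConnected Nminus)
    (hdisj : Disjoint Nplus Nminus)
    (distN : ℝ)
    (hdistN : distN = sInf {d : ℝ | ∃ a ∈ Nplus, ∃ b ∈ Nminus, d = dist a b})
    (hdistNpos : 0 < distN)
    (δN : ℝ) (hδN : 0 < δN) (hδN' : δN < distN / 4)
    (f : ℝ → ℝ) (hf : ContDiff ℝ (⊤ : ℕ∞) f) (hf0 : ∀ s, 0 ≤ f s)
    (hfid : ∀ s ∈ Set.Icc (0:ℝ) (δN^2), f s = s)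
    (hfconst : ∀ s : ℝ, 2 * δN^2 ≤ s → f s = 2 * δN^2)
    (hfpos : ∀ s : ℝ, 0 < s → 0 < f s)
    (F : EuclideanSpace ℝ (Fin k) → ℝ) (hF0 : ∀ u, 0 ≤ F u)
    (hFloc : ∀ u, Metric.infDist u (Nplus ∪ Nminus) ≤ distN / 2 →
      F u = f ((Metric.infDist u (Nplus ∪ Nminus))^2))
    (cF : ℝ) (hcF : cF = 2 * ∫ l in (0:ℝ)..(distN / 2), Real.sqrt (2 * f (l^2)))
    (dF : EuclideanSpace ℝ (Fin k) → ℝ)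
    (hdF : ∀ u, dF u =
      if Metric.infDist u Nminus ≤ distN / 2 then
        ∫ l in (0:ℝ)..(Metric.infDist u Nminus), Real.sqrt (2 * f (l^2))
      else if Metric.infDist u Nplus ≤ distN / 2 then
        cF - ∫ l in (0:ℝ)..(Metric.infDist u Nplus), Real.sqrt (2 * f (l^2))
      else cF / 2) :
    (∃ L : NNReal, LipschitzWith L dF) ∧
    (∀ u, 0 ≤ dF u ∧ dF u ≤ cF) ∧
    (∀ u, dF u = 0 ↔ u ∈ Nminus) ∧
    (∀ u, dF u = cF ↔ u ∈ Nplus) ∧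
    (∀ᵐ u : EuclideanSpace ℝ (Fin k),
      ‖fderiv ℝ dF u‖ ≤ Real.sqrt (2 * F u)) := by
  set R : ℝ := distN / 2 with hRdef
  have hRpos : 0 < R := by positivity
  set h : ℝ → ℝ := fun l => Real.sqrt (2 * f (l ^ 2)) with hhdef
  set g : ℝ → ℝ := fun t => ∫ l in (0:ℝ)..t, h l with hgdef
  have hNpne : Nplus.Nonempty := hNpconn.nonempty
  have hNmne : Nminus.Nonempty := hNmconn.nonempty
  -- continuity and nonnegativity of h
  have hcont : Continuous h :=
    (continuous_const.mul (hf.continuous.comp (continuous_pow 2))).sqrt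
  have hh0 : ∀ l, 0 ≤ h l := fun l => Real.sqrt_nonneg _
  have hint : ∀ a b : ℝ, IntervalIntegrable h volume a b := fun a b =>
    hcont.intervalIntegrable a b
  have hgsub : ∀ a b : ℝ, g b - g a = ∫ l in a..b, h l := fun a b =>
    intervalIntegral.integral_interval_sub_left (hint 0 b) (hint 0 a)
  have hgmono : ∀ a b : ℝ, a ≤ b → g a ≤ g b := by
    intro a b hab
    have : 0 ≤ g b - g a := by
      rw [hgsub]
      exact intervalIntegral.integral_nonneg hab fun x _ => hh0 x
    linarith
  have hg0 : g 0 = 0 := intervalIntegral.integral_same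
  have hgpos : ∀ t : ℝ, 0 < t → 0 < g t := by
    intro t ht
    have : 0 < ∫ l in (0:ℝ)..t, h l := by
      apply intervalIntegral.intervalIntegral_pos_of_pos_on (hint 0 t) _ ht
      intro x hx
      have hx2 : 0 < x ^ 2 := pow_pos hx.1 2
      exact Real.sqrt_pos.2 (by have := hfpos _ hx2; linarith)
    simpa [hgdef] using this
  have hglip : ∀ (C : ℝ) (a b : ℝ), (∀ l ∈ Set.uIoc a b, h l ≤ C) →
      |g b - g a| ≤ C * |b - a| := by
    intro C a b hC
    rw [hgsub]
    have := intervalIntegral.norm_integral_le_of_norm_le_const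
      (f := h) (a := a) (b := b) (C := C) (fun x hx => by
        rw [Real.norm_eq_abs, abs_of_nonneg (hh0 x)]; exact hC x hx)
    simpa [Real.norm_eq_abs] using this
  -- global bound for h
  obtain ⟨s₀, hs₀mem, hs₀⟩ := (isCompact_Icc (a := (0:ℝ)) (b := 2 * δN ^ 2)).exists_isMaxOn
    ⟨0, by constructor <;> positivity⟩ (hf.continuous.continuousOn)
  set C : ℝ := Real.sqrt (2 * (max (f s₀) (2 * δN ^ 2))) with hCdef
  have hC0 : 0 ≤ C := Real.sqrt_nonneg _
  have hhC : ∀ l, h l ≤ C := by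
    intro l
    apply Real.sqrt_le_sqrt
    have : f (l ^ 2) ≤ max (f s₀) (2 * δN ^ 2) := by
      rcases le_or_gt (l ^ 2) (2 * δN ^ 2) with hl | hl
      · exact le_max_of_le_left (hs₀ ⟨by positivity, hl⟩)
      · rw [hfconst _ hl.le]; exact le_max_right _ _
    linarith
  -- sum of distances
  have hlipinf : ∀ (s : Set (EuclideanSpace ℝ (Fin k))) (v w : EuclideanSpace ℝ (Fin k)),
      |Metric.infDist v s - Metric.infDist w s| ≤ dist v w := by
    intro s v w
    rw [abs_sub_le_iff]
    constructor
    · have := Metric.infDist_le_infDist_add_dist (x := v) (y := w) (s := s)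
      linarith
    · have := Metric.infDist_le_infDist_add_dist (x := w) (y := v) (s := s)
      rw [dist_comm] at this
      linarith
  have hSUM : ∀ u : EuclideanSpace ℝ (Fin k),
      2 * R ≤ Metric.infDist u Nminus + Metric.infDist u Nplus := by
    intro u
    obtain ⟨a, ha, hda⟩ := hNpc.exists_infDist_eq_dist hNpne u
    obtain ⟨b, hb, hdb⟩ := hNmc.exists_infDist_eq_dist hNmne u
    have h1 : distN ≤ dist a b := by
      rw [hdistN]
      apply csInf_le
      · exact ⟨0, by rintro d ⟨x, _, y, _, rfl⟩; exact dist_nonneg⟩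
      · exact ⟨a, ha, b, hb, rfl⟩
    have h2 : dist a b ≤ dist a u + dist u b := dist_triangle a u b
    have : (2:ℝ) * R = distN := by rw [hRdef]; ring
    rw [this, hda, hdb, dist_comm u a]
    linarith
  -- representation lemma
  have hcF2 : cF / 2 = g R := by rw [hcF]; ring
  have hREP : ∀ u, dF u = g (min (Metric.infDist u Nminus) R)
      - g (min (Metric.infDist u Nplus) R) + cF / 2 := by
    intro u
    rw [hdF u]
    split_ifs with h1 h2
    · have hge : R ≤ Metric.infDist u Nplus := by have := hSUM u; linarith
      rw [min_eq_left h1, min_eq_right hge, ← hcF2]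
      ring_nf
      rfl
    · have hge : R ≤ Metric.infDist u Nminus := (not_le.1 h1).le
      rw [min_eq_right hge, min_eq_left h2, ← hcF2]
      ring_nf
      rfl
    · have hge1 : R ≤ Metric.infDist u Nminus := (not_le.1 h1).le
      have hge2 : R ≤ Metric.infDist u Nplus := (not_le.1 h2).le
      rw [min_eq_right hge1, min_eq_right hge2]
      ring
  -- bounds on the two g-terms
  have hterm : ∀ u : EuclideanSpace ℝ (Fin k), ∀ s : Set (EuclideanSpace ℝ (Fin k)),
      0 ≤ g (min (Metric.infDist u s) R) ∧ g (min (Metric.infDist u s) R) ≤ g R := by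
    intro u s
    constructor
    · rw [← hg0]
      exact hgmono _ _ (le_min Metric.infDist_nonneg hRpos.le)
    · exact hgmono _ _ (min_le_right _ _)
  -- Part 2: bounds
  have hbounds : ∀ u, 0 ≤ dF u ∧ dF u ≤ cF := by
    intro u
    obtain ⟨hA0, hAR⟩ := hterm u Nminus
    obtain ⟨hB0, hBR⟩ := hterm u Nplus
    rw [hREP u]
    constructor <;> linarith [hcF2]
  -- Part 1 : Lipschitz
  have hLip : ∃ L : NNReal, LipschitzWith L dF := by
    refine ⟨(2 * C).toNNReal, LipschitzWith.of_dist_le_mul fun u v => ?_⟩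
    rw [Real.coe_toNNReal _ (by positivity), Real.dist_eq, hREP u, hREP v]
    have key : ∀ s : Set (EuclideanSpace ℝ (Fin k)),
        |g (min (Metric.infDist u s) R) - g (min (Metric.infDist v s) R)| ≤ C * dist u v := by
      intro s
      have h1 := hglip C (min (Metric.infDist v s) R) (min (Metric.infDist u s) R)
        (fun l _ => hhC l)
      have h2 : |min (Metric.infDist u s) R - min (Metric.infDist v s) R|
          ≤ dist u v := le_trans aux_min_one (hlipinf s u v)
      calc |g (min (Metric.infDist u s) R) - g (min (Metric.infDist v s) R)|
          ≤ C * |min (Metric.infDist u s) R - min (Metric.infDist v s) R| := h1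
        _ ≤ C * dist u v := by
            exact mul_le_mul_of_nonneg_left h2 hC0
    have k1 := key Nminus
    have k2 := key Nplus
    have heq : g (min (Metric.infDist u Nminus) R) - g (min (Metric.infDist u Nplus) R) + cF / 2
        - (g (min (Metric.infDist v Nminus) R) - g (min (Metric.infDist v Nplus) R) + cF / 2)
        = (g (min (Metric.infDist u Nminus) R) - g (min (Metric.infDist v Nminus) R))
          - (g (min (Metric.infDist u Nplus) R) - g (min (Metric.infDist v Nplus) R)) := by ring
    rw [heq]
    have htri := abs_sub (g (min (Metric.infDist u Nminus) R) - g (min (Metric.infDist v Nminus) R))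
      (g (min (Metric.infDist u Nplus) R) - g (min (Metric.infDist v Nplus) R))
    linarith
  -- Part 3
  have hzero : ∀ u, dF u = 0 ↔ u ∈ Nminus := by
    intro u
    obtain ⟨hA0, hAR⟩ := hterm u Nminus
    obtain ⟨hB0, hBR⟩ := hterm u Nplus
    constructor
    · intro h0
      rw [hREP u] at h0
      have hA : g (min (Metric.infDist u Nminus) R) = 0 := by linarith [hcF2]
      have hmin0 : Metric.infDist u Nminus = 0 := by
        by_contra hne
        have hpos : 0 < Metric.infDist u Nminus :=
          lt_of_le_of_ne Metric.infDist_nonneg (Ne.symm hne)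
        have := hgpos _ (lt_min hpos hRpos)
        linarith
      exact (hNmc.isClosed.mem_iff_infDist_zero hNmne).2 hmin0
    · intro hu
      have hm0 : Metric.infDist u Nminus = 0 := Metric.infDist_zero_of_mem hu
      have hge : R ≤ Metric.infDist u Nplus := by have := hSUM u; linarith
      rw [hREP u, hm0, min_eq_left hRpos.le, hg0, min_eq_right hge, ← hcF2]
      ring
  -- Part 4
  have hcFiff : ∀ u, dF u = cF ↔ u ∈ Nplus := by
    intro u
    obtain ⟨hA0, hAR⟩ := hterm u Nminus
    obtain ⟨hB0, hBR⟩ := hterm u Nplus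
    constructor
    · intro h0
      rw [hREP u] at h0
      have hB : g (min (Metric.infDist u Nplus) R) = 0 := by linarith [hcF2]
      have hmin0 : Metric.infDist u Nplus = 0 := by
        by_contra hne
        have hpos : 0 < Metric.infDist u Nplus :=
          lt_of_le_of_ne Metric.infDist_nonneg (Ne.symm hne)
        have := hgpos _ (lt_min hpos hRpos)
        linarith
      exact (hNpc.isClosed.mem_iff_infDist_zero hNpne).2 hmin0
    · intro hu
      have hp0 : Metric.infDist u Nplus = 0 := Metric.infDist_zero_of_mem hu
      have hge : R ≤ Metric.infDist u Nminus := by have := hSUM u; linarith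
      rw [hREP u, hp0, min_eq_left hRpos.le, hg0, min_eq_right hge, ← hcF2]
      ring
  -- Part 5
  refine ⟨hLip, hbounds, hzero, hcFiff, ae_of_all _ fun u => ?_⟩
  have hunion : Metric.infDist u (Nplus ∪ Nminus)
      = min (Metric.infDist u Nplus) (Metric.infDist u Nminus) := by
    rw [Metric.infDist, Metric.infDist, Metric.infDist, EMetric.infEdist_union,
      ENNReal.toReal_min (Metric.infEdist_ne_top hNpne) (Metric.infEdist_ne_top hNmne)]
  set dm := Metric.infDist u Nminus with hdmdef
  set dp := Metric.infDist u Nplus with hdpdef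
  have hs2 : Real.sqrt 2 < 2 := by
    have h4 : Real.sqrt 2 < Real.sqrt 4 := Real.sqrt_lt_sqrt (by norm_num) (by norm_num)
    rwa [show (4:ℝ) = 2^2 by norm_num, Real.sqrt_sq (by norm_num)] at h4
  have h2δ : Real.sqrt 2 * δN < R := by
    have : δN < R / 2 := by rw [hRdef]; linarith
    nlinarith [Real.sqrt_nonneg 2]
  by_cases hm : dm < R
  · -- near Nminus
    have hge : R < dp := by have := hSUM u; linarith
    have h1 : Metric.infDist u (Nplus ∪ Nminus) = dm := by
      rw [hunion]; exact min_eq_right (by linarith)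
    have hFu : Real.sqrt (2 * F u) = h dm := by
      rw [hFloc u (by rw [h1]; linarith), h1]
    rw [hFu]
    refine le_of_forall_pos_le_add fun ε hε => ?_
    obtain ⟨ρ₁, hρ₁pos, hcρ⟩ := Metric.continuousAt_iff.1 hcont.continuousAt ε hε
    set ρ := min ρ₁ ((R - dm)/2) with hρdef
    have hρpos : 0 < ρ := lt_min hρ₁pos (by linarith)
    have hCnn : 0 ≤ h dm + ε := add_nonneg (hh0 dm) hε.le
    have hlipon : LipschitzOnWith (h dm + ε).toNNReal dF (Metric.ball u ρ) := by
      rw [lipschitzOnWith_iff_dist_le_mul]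
      intro v hv w hw
      rw [Real.dist_eq, Real.coe_toNNReal _ hCnn]
      have hv2 : |Metric.infDist v Nminus - dm| < ρ :=
        lt_of_le_of_lt (hlipinf Nminus v u) (Metric.mem_ball.1 hv)
      have hw2 : |Metric.infDist w Nminus - dm| < ρ :=
        lt_of_le_of_lt (hlipinf Nminus w u) (Metric.mem_ball.1 hw)
      obtain ⟨hv2a, hv2b⟩ := abs_lt.1 hv2
      obtain ⟨hw2a, hw2b⟩ := abs_lt.1 hw2
      have hρle1 : ρ ≤ ρ₁ := min_le_left _ _
      have hρle2 : ρ ≤ (R - dm)/2 := min_le_right _ _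
      have hvm : Metric.infDist v Nminus < R := by linarith
      have hwm : Metric.infDist w Nminus < R := by linarith
      have hvp : R ≤ Metric.infDist v Nplus := by have := hSUM v; linarith
      have hwp : R ≤ Metric.infDist w Nplus := by have := hSUM w; linarith
      rw [hREP v, hREP w, min_eq_left hvm.le, min_eq_left hwm.le,
        min_eq_right hvp, min_eq_right hwp]
      have heq : g (Metric.infDist v Nminus) - g R + cF / 2
          - (g (Metric.infDist w Nminus) - g R + cF / 2)
          = g (Metric.infDist v Nminus) - g (Metric.infDist w Nminus) := by ring
      rw [heq]
      have hb : ∀ l ∈ Set.uIoc (Metric.infDist w Nminus) (Metric.infDist v Nminus),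
          h l ≤ h dm + ε := by
        intro l hl
        have hl' : |l - dm| < ρ := by
          rcases Set.mem_uIoc.1 hl with ⟨ha, hb⟩ | ⟨ha, hb⟩ <;>
            exact abs_lt.2 ⟨by linarith, by linarith⟩
        have := hcρ (show dist l dm < ρ₁ by rw [Real.dist_eq]; linarith)
        rw [Real.dist_eq] at this
        have := abs_lt.1 this
        linarith [this.2]
      calc |g (Metric.infDist v Nminus) - g (Metric.infDist w Nminus)|
          ≤ (h dm + ε) * |Metric.infDist v Nminus - Metric.infDist w Nminus| :=
            hglip _ _ _ hb
        _ ≤ (h dm + ε) * dist v w :=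
            mul_le_mul_of_nonneg_left (hlipinf Nminus v w) hCnn
    have := norm_fderiv_le_of_lipschitzOn ℝ (Metric.ball_mem_nhds u hρpos) hlipon
    rwa [Real.coe_toNNReal _ hCnn] at this
  · by_cases hp : dp < R
    · -- near Nplus
      have hge : R ≤ dm := not_lt.1 hm
      have h1 : Metric.infDist u (Nplus ∪ Nminus) = dp := by
        rw [hunion]; exact min_eq_left (by linarith)
      have hFu : Real.sqrt (2 * F u) = h dp := by
        rw [hFloc u (by rw [h1]; linarith), h1]
      rw [hFu]
      refine le_of_forall_pos_le_add fun ε hε => ?_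
      obtain ⟨ρ₁, hρ₁pos, hcρ⟩ := Metric.continuousAt_iff.1 hcont.continuousAt ε hε
      set ρ := min ρ₁ ((R - dp)/2) with hρdef
      have hρpos : 0 < ρ := lt_min hρ₁pos (by linarith)
      have hCnn : 0 ≤ h dp + ε := add_nonneg (hh0 dp) hε.le
      have hlipon : LipschitzOnWith (h dp + ε).toNNReal dF (Metric.ball u ρ) := by
        rw [lipschitzOnWith_iff_dist_le_mul]
        intro v hv w hw
        rw [Real.dist_eq, Real.coe_toNNReal _ hCnn]
        have hv2 : |Metric.infDist v Nplus - dp| < ρ :=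
          lt_of_le_of_lt (hlipinf Nplus v u) (Metric.mem_ball.1 hv)
        have hw2 : |Metric.infDist w Nplus - dp| < ρ :=
          lt_of_le_of_lt (hlipinf Nplus w u) (Metric.mem_ball.1 hw)
        obtain ⟨hv2a, hv2b⟩ := abs_lt.1 hv2
        obtain ⟨hw2a, hw2b⟩ := abs_lt.1 hw2
        have hρle1 : ρ ≤ ρ₁ := min_le_left _ _
        have hρle2 : ρ ≤ (R - dp)/2 := min_le_right _ _
        have hvm : Metric.infDist v Nplus < R := by linarith
        have hwm : Metric.infDist w Nplus < R := by linarith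
        have hvp : R ≤ Metric.infDist v Nminus := by have := hSUM v; linarith
        have hwp : R ≤ Metric.infDist w Nminus := by have := hSUM w; linarith
        rw [hREP v, hREP w, min_eq_left hvm.le, min_eq_left hwm.le,
          min_eq_right hvp, min_eq_right hwp]
        have heq : g R - g (Metric.infDist v Nplus) + cF / 2
            - (g R - g (Metric.infDist w Nplus) + cF / 2)
            = g (Metric.infDist w Nplus) - g (Metric.infDist v Nplus) := by ring
        rw [heq]
        have hb : ∀ l ∈ Set.uIoc (Metric.infDist v Nplus) (Metric.infDist w Nplus),
            h l ≤ h dp + ε := by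
          intro l hl
          have hl' : |l - dp| < ρ := by
            rcases Set.mem_uIoc.1 hl with ⟨ha, hb⟩ | ⟨ha, hb⟩ <;>
              exact abs_lt.2 ⟨by linarith, by linarith⟩
          have := hcρ (show dist l dp < ρ₁ by rw [Real.dist_eq]; linarith)
          rw [Real.dist_eq] at this
          have := abs_lt.1 this
          linarith [this.2]
        calc |g (Metric.infDist w Nplus) - g (Metric.infDist v Nplus)|
            ≤ (h dp + ε) * |Metric.infDist w Nplus - Metric.infDist v Nplus| :=
              hglip _ _ _ hb
          _ ≤ (h dp + ε) * dist v w := by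
              rw [abs_sub_comm]
              exact mul_le_mul_of_nonneg_left (hlipinf Nplus v w) hCnn
      have := norm_fderiv_le_of_lipschitzOn ℝ (Metric.ball_mem_nhds u hρpos) hlipon
      rwa [Real.coe_toNNReal _ hCnn] at this
    · -- both distances ≥ R
      have hgem : R ≤ dm := not_lt.1 hm
      have hgep : R ≤ dp := not_lt.1 hp
      by_cases hi : R < dm ∧ R < dp
      · -- dF locally constant
        set ρ := min (dm - R) (dp - R) with hρdef
        have hρpos : 0 < ρ := lt_min (by linarith [hi.1]) (by linarith [hi.2])
        have hlipon : LipschitzOnWith 0 dF (Metric.ball u ρ) := by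
          rw [lipschitzOnWith_iff_dist_le_mul]
          intro v hv w hw
          have hconst : ∀ z ∈ Metric.ball u ρ, dF z = cF / 2 := by
            intro z hz
            have hzm : |Metric.infDist z Nminus - dm| < ρ :=
              lt_of_le_of_lt (hlipinf Nminus z u) (Metric.mem_ball.1 hz)
            have hzp : |Metric.infDist z Nplus - dp| < ρ :=
              lt_of_le_of_lt (hlipinf Nplus z u) (Metric.mem_ball.1 hz)
            obtain ⟨hzma, _⟩ := abs_lt.1 hzm
            obtain ⟨hzpa, _⟩ := abs_lt.1 hzp
            have h1 : R ≤ Metric.infDist z Nminus := by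
              have := min_le_left (dm - R) (dp - R); linarith
            have h2 : R ≤ Metric.infDist z Nplus := by
              have := min_le_right (dm - R) (dp - R); linarith
            rw [hREP z, min_eq_right h1, min_eq_right h2]
            ring
          rw [hconst v hv, hconst w hw, dist_self]
          positivity
        have := norm_fderiv_le_of_lipschitzOn ℝ (Metric.ball_mem_nhds u hρpos) hlipon
        simp only [NNReal.coe_zero] at this
        exact le_trans this (Real.sqrt_nonneg _)
      · -- boundary case : min dp dm = R
        have hminR : min dp dm = R := by
          rcases not_and_or.1 hi with hc | hc
          · have : dm = R := le_antisymm (not_lt.1 hc) hgem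
            rw [this]; exact min_eq_right (by linarith)
          · have : dp = R := le_antisymm (not_lt.1 hc) hgep
            rw [min_comm, this]; exact min_eq_right (by linarith)
        have hsq2 : (Real.sqrt 2 * δN) ^ 2 = 2 * δN ^ 2 := by
          rw [mul_pow, Real.sq_sqrt (show (0:ℝ) ≤ 2 by norm_num)]
        have hδsq : 2 * δN ^ 2 ≤ R ^ 2 := by
          have hnn : 0 ≤ Real.sqrt 2 * δN := by positivity
          have := pow_le_pow_left₀ hnn h2δ.le 2
          linarith
        have hFu : Real.sqrt (2 * F u) = 2 * δN := by
          rw [hFloc u (by rw [hunion, hminR]), hunion, hminR, hfconst _ hδsq,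
            show (2:ℝ) * (2 * δN ^ 2) = (2 * δN)^2 by ring, Real.sqrt_sq (by positivity)]
        rw [hFu]
        have hδnn : (0:ℝ) ≤ 2 * δN := by positivity
        set ρ := R - Real.sqrt 2 * δN with hρdef
        have hρpos : 0 < ρ := by rw [hρdef]; linarith
        have hconstint : ∀ a b : ℝ, Real.sqrt 2 * δN ≤ a → Real.sqrt 2 * δN ≤ b →
            g b - g a = 2 * δN * (b - a) := by
          intro a b ha hb
          rw [hgsub]
          rw [intervalIntegral.integral_congr (g := fun _ => 2 * δN) ?_,
            intervalIntegral.integral_const, smul_eq_mul]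
          · ring
          · intro l hl
            have hl' : Real.sqrt 2 * δN ≤ l := by
              rcases Set.mem_uIcc.1 hl with ⟨h1, _⟩ | ⟨h1, _⟩ <;> linarith
            have hl2 : 2 * δN ^ 2 ≤ l ^ 2 := by
              have hnn : 0 ≤ Real.sqrt 2 * δN := by positivity
              have := pow_le_pow_left₀ hnn hl' 2
              linarith
            show Real.sqrt (2 * f (l ^ 2)) = 2 * δN
            rw [hfconst _ hl2, show (2:ℝ) * (2 * δN ^ 2) = (2 * δN)^2 by ring,
              Real.sqrt_sq (by positivity)]
        have hlipon : LipschitzOnWith (2 * δN).toNNReal dF (Metric.ball u ρ) := by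
          rw [lipschitzOnWith_iff_dist_le_mul]
          intro v hv w hw
          rw [Real.dist_eq, Real.coe_toNNReal _ hδnn]
          have hbd : ∀ z ∈ Metric.ball u ρ, ∀ s : Set (EuclideanSpace ℝ (Fin k)),
              R ≤ Metric.infDist u s →
              Real.sqrt 2 * δN ≤ min (Metric.infDist z s) R := by
            intro z hz s hs
            have hlz : |Metric.infDist z s - Metric.infDist u s| ≤ dist z u := hlipinf s z u
            obtain ⟨hz1, _⟩ := abs_le.1 hlz
            have hzu : dist z u < ρ := Metric.mem_ball.1 hz
            refine le_min (by rw [hρdef] at hzu; linarith) (by linarith)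
          have e1 := hconstint (min (Metric.infDist w Nminus) R)
            (min (Metric.infDist v Nminus) R)
            (hbd w hw Nminus hgem) (hbd v hv Nminus hgem)
          have e2 := hconstint (min (Metric.infDist w Nplus) R)
            (min (Metric.infDist v Nplus) R)
            (hbd w hw Nplus hgep) (hbd v hv Nplus hgep)
          rw [hREP v, hREP w]
          have heq : g (min (Metric.infDist v Nminus) R) - g (min (Metric.infDist v Nplus) R)
              + cF / 2 - (g (min (Metric.infDist w Nminus) R)
              - g (min (Metric.infDist w Nplus) R) + cF / 2)
              = (g (min (Metric.infDist v Nminus) R) - g (min (Metric.infDist w Nminus) R))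
              - (g (min (Metric.infDist v Nplus) R) - g (min (Metric.infDist w Nplus) R)) := by
            ring
          rw [heq, e1, e2]
          have heq2 : 2 * δN * (min (Metric.infDist v Nminus) R - min (Metric.infDist w Nminus) R)
              - 2 * δN * (min (Metric.infDist v Nplus) R - min (Metric.infDist w Nplus) R)
              = 2 * δN * ((min (Metric.infDist v Nminus) R - min (Metric.infDist v Nplus) R)
              - (min (Metric.infDist w Nminus) R - min (Metric.infDist w Nplus) R)) := by ring
          rw [heq2, abs_mul, abs_of_nonneg hδnn]
          refine mul_le_mul_of_nonneg_left ?_ hδnn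
          exact aux_min_lip (hSUM v) (hSUM w) (hlipinf Nminus v w) (hlipinf Nplus v w)
        have := norm_fderiv_le_of_lipschitzOn ℝ (Metric.ball_mem_nhds u hρpos) hlipon
        rwa [Real.coe_toNNReal _ hδnn] at this
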